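/- Let G be a group, V a subgroup of G commensurable with all of its conjugates. Then the map q : G → ℚ>0 defined by q(g) = [V : V ∩ V^g] / [V^g : V ∩ V^g] is a group homomorphism into the multiplicative group of positive rationals. -/

import Mathlib

open Subgroup

section Aux

variable {G : Type*} [Group G]

/-- relindex is invariant under a mul equivalence. -/
lemma relindex_map_mulEquiv (e : G ≃* G) (H K : Subgroup G) :
    (H.map e.toMonoidHom).relIndex (K.map e.toMonoidHom) = H.relIndex K := by
  have h1 : H.map e.toMonoidHom = comap e.symm.toMonoidHom H := by
    ext x
    simp [Subgroup.mem_map, Subgroup.mem_comap]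
    constructor
    · rintro ⟨y, hy, rfl⟩; simpa
    · intro hx; exact ⟨e.symm x, hx, by simp⟩
  rw [h1, Subgroup.relIndex_comap]
  congr 1
  ext x
  simp [Subgroup.mem_map]

lemma ratio_eq (X Y D : Subgroup G) (hD : D ≤ X ⊓ Y)
    (hDX : D.relIndex X ≠ 0) (hDY : D.relIndex Y ≠ 0) :
    ((Y.relIndex X : ℚ)) / (X.relIndex Y) = (D.relIndex X : ℚ) / (D.relIndex Y) := by
  have hX : D.relIndex (X ⊓ Y) * (X ⊓ Y).relIndex X = D.relIndex X :=
    relIndex_mul_relIndex D (X ⊓ Y) X hD inf_le_left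
  have hY : D.relIndex (X ⊓ Y) * (X ⊓ Y).relIndex Y = D.relIndex Y :=
    relIndex_mul_relIndex D (X ⊓ Y) Y hD inf_le_right
  have e1 : (X ⊓ Y).relIndex X = Y.relIndex X := by
    rw [inf_comm, inf_relIndex_right]
  have e2 : (X ⊓ Y).relIndex Y = X.relIndex Y := by
    rw [inf_relIndex_right]
  rw [e1] at hX; rw [e2] at hY
  have hk : (D.relIndex (X ⊓ Y) : ℚ) ≠ 0 := by
    exact_mod_cast fun h => hDX (by rw [← hX, h, zero_mul] : D.relIndex X = 0)
  have hXY : (X.relIndex Y : ℚ) ≠ 0 := by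
    exact_mod_cast fun h => hDY (by rw [← hY, h, mul_zero] : D.relIndex Y = 0)
  rw [← hX, ← hY]
  push_cast
  field_simp

lemma cocycle (A B C : Subgroup G) (hAB : Commensurable A B) (hBC : Commensurable B C)
    (hAC : Commensurable A C) :
    ((B.relIndex A : ℚ)) / (A.relIndex B) * (((C.relIndex B : ℚ)) / (B.relIndex C)) =
      ((C.relIndex A : ℚ)) / (A.relIndex C) := by
  set D := A ⊓ B ⊓ C with hDdef
  have hDA : D ≤ A := le_trans inf_le_left inf_le_left
  have hDB : D ≤ B := le_trans inf_le_left inf_le_right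
  have hDC : D ≤ C := inf_le_right
  have hrA : D.relIndex A ≠ 0 := by
    have : D = (B ⊓ C) ⊓ A := by rw [hDdef]; ac_rfl
    rw [this, inf_relIndex_right]
    exact relIndex_inf_ne_zero hAB.2 hAC.2
  have hrB : D.relIndex B ≠ 0 := by
    have : D = (A ⊓ C) ⊓ B := by rw [hDdef]; ac_rfl
    rw [this, inf_relIndex_right]
    exact relIndex_inf_ne_zero hAB.1 hBC.2
  have hrC : D.relIndex C ≠ 0 := by
    have : D = (A ⊓ B) ⊓ C := by rw [hDdef]
    rw [this, inf_relIndex_right]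
    exact relIndex_inf_ne_zero hAC.1 hBC.1
  rw [ratio_eq A B D (le_inf hDA hDB) hrA hrB,
      ratio_eq B C D (le_inf hDB hDC) hrB hrC,
      ratio_eq A C D (le_inf hDA hDC) hrA hrC]
  have h1 : (D.relIndex B : ℚ) ≠ 0 := by exact_mod_cast hrB
  field_simp

end Aux

/-- The conjugate subgroup `V^g = g⁻¹ V g`. -/
def conjSubgroup {G : Type*} [Group G] (V : Subgroup G) (g : G) : Subgroup G :=
  V.map (MulAut.conj g⁻¹).toMonoidHom

lemma conjSubgroup_mul {G : Type*} [Group G] (V : Subgroup G) (g h : G) :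
    conjSubgroup V (g * h) = (conjSubgroup V g).map (MulAut.conj h⁻¹).toMonoidHom := by
  unfold conjSubgroup
  rw [Subgroup.map_map]
  congr 1
  ext x
  simp [mul_assoc]

lemma conjSubgroup_self_eq {G : Type*} [Group G] (V : Subgroup G) (h : G) :
    conjSubgroup V h = V.map (MulAut.conj h⁻¹).toMonoidHom := rfl

/-- If `V` is commensurable with all of its conjugates then
`q(g) = [V : V ∩ V^g] / [V^g : V ∩ V^g]` defines a group homomorphism `G → ℚ>0`. -/
theorem stmt_4 {G : Type*} [Group G] (V : Subgroup G)
    (hconj : ∀ g : G, Commensurable V (conjSubgroup V g)) :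
    ∃ q : G →* ℚˣ, ∀ g : G,
      (0 : ℚ) < (q g : ℚ) ∧
      (q g : ℚ) = ((conjSubgroup V g).relIndex V : ℚ) /
        (V.relIndex (conjSubgroup V g) : ℚ) := by
  set f : G → ℚ := fun g =>
    ((conjSubgroup V g).relIndex V : ℚ) / (V.relIndex (conjSubgroup V g) : ℚ) with hf
  have hpos : ∀ g : G, 0 < f g := by
    intro g
    apply div_pos
    · exact_mod_cast Nat.pos_of_ne_zero (hconj g).2
    · exact_mod_cast Nat.pos_of_ne_zero (hconj g).1
  have hmul : ∀ g h : G, f (g * h) = f g * f h := by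
    intro g h
    have hVh : Commensurable V (conjSubgroup V h) := hconj h
    have hcomm2 : Commensurable (conjSubgroup V h) (conjSubgroup V (g * h)) := by
      constructor
      · rw [conjSubgroup_mul V g h, conjSubgroup_self_eq V h, relindex_map_mulEquiv]
        exact (hconj g).1
      · rw [conjSubgroup_mul V g h, conjSubgroup_self_eq V h, relindex_map_mulEquiv]
        exact (hconj g).2
    have key := cocycle V (conjSubgroup V h) (conjSubgroup V (g * h)) hVh hcomm2 (hconj (g * h))
    have e1 : ((conjSubgroup V (g * h)).relIndex (conjSubgroup V h) : ℚ) /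
        ((conjSubgroup V h).relIndex (conjSubgroup V (g * h)) : ℚ) =
        ((conjSubgroup V g).relIndex V : ℚ) / (V.relIndex (conjSubgroup V g) : ℚ) := by
      rw [conjSubgroup_mul V g h, conjSubgroup_self_eq V h, relindex_map_mulEquiv,
        relindex_map_mulEquiv]
    simp only [hf]
    rw [← key, e1]
    ring
  refine ⟨MonoidHom.mk' (fun g => Units.mk0 (f g) (ne_of_gt (hpos g)))
    (fun a b => Units.ext (by simp [hmul a b])), fun g => ?_⟩
  exact ⟨hpos g, rfl⟩
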